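/- Let ε > 0 and let K, E be relatively closed subsets of B(x0,r0) with x0 ∈ K ⊆ E. Assume E separates B(x0,r0), β_E(x0,r0) ≤ ε, and r0^{-1} H¹(E \ K) ≤ ε. Then the bilateral flatness of K satisfies β^bil_K(x0,r0) ≤ 4ε. -/

import Mathlib

open Metric Set MeasureTheory

noncomputable section

abbrev E2 := EuclideanSpace ℝ (Fin 2)

/-- The affine line through `x` with direction `v`. -/
def lineThrough (x v : E2) : Set E2 := {p | ∃ t : ℝ, p = x + t • v}

/-- The (unilateral) flatness `β_K(x0, r0)`: the infimum of all `ε ≥ 0` such that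
`K ∩ B(x0,r0)` is contained in a strip of half-width `ε · r0` around some line through `x0`. -/
noncomputable def flatness (K : Set E2) (x0 : E2) (r0 : ℝ) : ℝ :=
  sInf {ε : ℝ | 0 ≤ ε ∧ ∃ v : E2, v ≠ 0 ∧
    ∀ y ∈ K ∩ ball x0 r0, infDist y (lineThrough x0 v) ≤ ε * r0}

/-- The bilateral flatness `β^bil_K(x0, r0)`: the infimum of all `ε ≥ 0` such that for some
line through `x0`, `K ∩ B(x0,r0)` is `ε r0`-close to the line and conversely each point of the
line in the ball is `ε r0`-close to `K`. -/
noncomputable def bilFlatness (K : Set E2) (x0 : E2) (r0 : ℝ) : ℝ :=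
  sInf {ε : ℝ | 0 ≤ ε ∧ ∃ v : E2, v ≠ 0 ∧
    (∀ y ∈ K ∩ ball x0 r0, infDist y (lineThrough x0 v) ≤ ε * r0) ∧
    (∀ y ∈ lineThrough x0 v ∩ ball x0 r0, infDist y K ≤ ε * r0)}

/-- `K` separates `B(x0,r0)`: the flatness is at most `1/2` and, for some unit normal `ν` of an
optimal approximating line, the two regions `D^±` of points of the ball lying at (signed) distance
more than `β_K(x0,r0)·r0` from the line on each side cannot be joined by a connected subset of
`B(x0,r0) \ K`, i.e. they lie in distinct connected components of `B(x0,r0) \ K`. -/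
def Separates (K : Set E2) (x0 : E2) (r0 : ℝ) : Prop :=
  flatness K x0 r0 ≤ 1 / 2 ∧
  ∃ ν : E2, ‖ν‖ = 1 ∧
    (∀ y ∈ K ∩ ball x0 r0, |(inner ℝ (y - x0) ν : ℝ)| ≤ flatness K x0 r0 * r0) ∧
    ∀ C : Set E2, IsConnected C → C ⊆ ball x0 r0 \ K →
      ¬ ((∃ p ∈ C, flatness K x0 r0 * r0 < (inner ℝ (p - x0) ν : ℝ)) ∧
         (∃ q ∈ C, (inner ℝ (q - x0) ν : ℝ) < -(flatness K x0 r0 * r0)))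

/-- `A` is relatively closed in `B`. -/
def RelClosedIn (A B : Set E2) : Prop := A ⊆ B ∧ closure A ∩ B ⊆ A

/-!
Take the line through `x0` orthogonal to the normal `ν` along which `E` separates. Points of `K`
are close to it because `K ⊆ E`. Conversely, if a point `y` of the line had no point of `K` within
`2εr0`, then every segment parallel to `ν`, of half-length `3/2 εr0` and at offset at most `εr0`
from `y`, would join the two sides inside `B(y, 2εr0) \ K`, hence meet `E \ K`. Projecting onto
the line, `H¹(E \ K) ≥ 2εr0`, a contradiction. Every point of the line in the ball is within
`2εr0` of `x0` or of such a `y`.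
-/

open scoped RealInnerProductSpace

section InnerProductSpace

variable {V : Type*} [NormedAddCommGroup V] [InnerProductSpace ℝ V]

theorem exists_unit_orthogonal_sq_norm_eq [Fact (Module.finrank ℝ V = 2)] {ν : V}
    (hν : ‖ν‖ = 1) :
    ∃ w : V, ‖w‖ = 1 ∧ ⟪w, ν⟫ = 0 ∧ ∀ u : V, ‖u‖ ^ 2 = ⟪u, ν⟫ ^ 2 + ⟪u, w⟫ ^ 2 := by
  have := FiniteDimensional.of_fact_finrank_eq_two (K := ℝ) (V := V)
  let o : Orientation ℝ V (Fin 2) := (Module.finBasisOfFinrankEq ℝ V Fact.out).orientation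
  refine ⟨o.rightAngleRotation ν, by simpa using hν, o.inner_rightAngleRotation_self ν, fun u => ?_⟩
  have h := o.inner_sq_add_areaForm_sq ν u
  rw [hν, one_pow, one_mul] at h
  rw [← h, real_inner_comm, o.inner_rightAngleRotation_right, o.areaForm_swap]

theorem hausdorffMeasure_image_inner_le [MeasurableSpace V] [BorelSpace V] {w : V} (hw : ‖w‖ ≤ 1)
    (S : Set V) :
    μH[1] ((fun z => ⟪w, z⟫) '' S) ≤ μH[1] S := by
  have hlip : LipschitzWith 1 (innerSL ℝ w) :=
    (innerSL ℝ w).lipschitz.weaken (by rw [← NNReal.coe_le_coe]; simpa using hw)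
  simpa using hlip.hausdorffMeasure_image_le zero_le_one S

-- `Separates E x0 r0` provides this for some unit `ν` with `b = flatness E x0 r0 * r0`.
def SeparatesSides (E : Set V) (x0 ν : V) (r0 b : ℝ) : Prop :=
  ∀ C : Set V, IsConnected C → C ⊆ ball x0 r0 \ E →
    ¬ ((∃ p ∈ C, b < ⟪p - x0, ν⟫) ∧ ∃ q ∈ C, ⟪q - x0, ν⟫ < -b)

theorem SeparatesSides.inter_segment_nonempty {E : Set V} {x0 ν p q : V} {r0 b : ℝ}
    (hsep : SeparatesSides E x0 ν r0 b) (hseg : segment ℝ q p ⊆ ball x0 r0)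
    (hp : b < ⟪p - x0, ν⟫) (hq : ⟪q - x0, ν⟫ < -b) : (E ∩ segment ℝ q p).Nonempty := by
  by_contra hdisj
  refine hsep (segment ℝ q p) ((convex_segment q p).isConnected ⟨q, left_mem_segment ℝ q p⟩)
    (fun z hz => ⟨hseg hz, fun hzE => hdisj ⟨z, hzE, hz⟩⟩)
    ⟨⟨p, right_mem_segment ℝ q p, hp⟩, q, left_mem_segment ℝ q p, hq⟩

theorem Icc_subset_image_inner_diff {K E : Set V} {x0 ν w y : V} {r0 b δ : ℝ}
    (hν : ‖ν‖ = 1) (hw : ‖w‖ = 1) (hwν : ⟪w, ν⟫ = 0) (hsep : SeparatesSides E x0 ν r0 b)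
    (hδ : 0 < δ) (hbδ : b ≤ δ) (hy : ⟪y - x0, ν⟫ = 0) (hball : ball y (2 * δ) ⊆ ball x0 r0)
    (hK : Disjoint (ball y (2 * δ)) K) :
    Icc (⟪w, y⟫ - δ) (⟪w, y⟫ + δ) ⊆ (fun z => ⟪w, z⟫) '' (E \ K) := by
  intro s hs
  set t := s - ⟪w, y⟫
  have ht : t ^ 2 ≤ δ ^ 2 := sq_le_sq' (by linarith [hs.1]) (by linarith [hs.2])
  -- `a > b` puts the endpoints on opposite sides, and `δ ^ 2 + a ^ 2 < (2 * δ) ^ 2`.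
  set a := 3 / 2 * δ with ha
  let pt : ℝ → V := fun c => y + t • w + c • ν
  have hpt_ball : ∀ c, c ^ 2 = a ^ 2 → pt c ∈ ball y (2 * δ) := by
    intro c hc
    have horth : ⟪t • w, c • ν⟫ = 0 := by simp [real_inner_smul_left, real_inner_smul_right, hwν]
    have hsq : ‖pt c - y‖ ^ 2 = t ^ 2 + c ^ 2 := by
      rw [show pt c - y = t • w + c • ν by simp only [pt]; abel,
        norm_add_sq_real, horth, norm_smul, norm_smul, hw, hν, mul_one, mul_one, Real.norm_eq_abs,
        Real.norm_eq_abs, sq_abs, sq_abs, mul_zero, add_zero]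
    rw [mem_ball, dist_eq_norm]
    exact abs_lt_of_sq_lt_sq' (by rw [hsq, hc, ha]; nlinarith) (by positivity) |>.2
  have hpt_side : ∀ c, ⟪pt c - x0, ν⟫ = c := by
    intro c
    have : pt c - x0 = (y - x0) + t • w + c • ν := by simp only [pt]; abel
    rw [this, inner_add_left, inner_add_left, hy, real_inner_smul_left, real_inner_smul_left,
      hwν, real_inner_self_eq_norm_sq, hν]
    ring
  have hpt_proj : ∀ c, ⟪w, pt c⟫ = s := by
    intro c
    simp only [pt, inner_add_right, real_inner_smul_right, real_inner_self_eq_norm_sq, hw, hwν, t]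
    ring
  have hseg_ball : segment ℝ (pt (-a)) (pt a) ⊆ ball y (2 * δ) :=
    (convex_ball y (2 * δ)).segment_subset (hpt_ball _ (neg_sq a)) (hpt_ball _ rfl)
  have hseg_proj : segment ℝ (pt (-a)) (pt a) ⊆ {z | ⟪w, z⟫ = s} :=
    (convex_hyperplane (innerₛₗ ℝ w).isLinear s).segment_subset (hpt_proj _) (hpt_proj _)
  obtain ⟨e, heE, he⟩ := hsep.inter_segment_nonempty (hseg_ball.trans hball)
    (by rw [hpt_side]; linarith [ha]) (by rw [hpt_side]; linarith [ha])
  exact ⟨e, ⟨heE, hK.notMem_of_mem_left (hseg_ball he)⟩, hseg_proj he⟩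

theorem infDist_le_of_hausdorffMeasure_diff_le [MeasurableSpace V] [BorelSpace V]
    {K E : Set V} {x0 ν w y : V} {r0 b δ : ℝ}
    (hν : ‖ν‖ = 1) (hw : ‖w‖ = 1) (hwν : ⟪w, ν⟫ = 0) (hsep : SeparatesSides E x0 ν r0 b)
    (hδ : 0 < δ) (hbδ : b ≤ δ) (hholes : μH[1] (E \ K) ≤ ENNReal.ofReal δ)
    (hy : ⟪y - x0, ν⟫ = 0) (hball : ball y (2 * δ) ⊆ ball x0 r0) :
    infDist y K ≤ 2 * δ := by
  by_contra! hfar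
  have hK : Disjoint (ball y (2 * δ)) K :=
    disjoint_ball_infDist.mono_left (ball_subset_ball hfar.le)
  have hcover := Icc_subset_image_inner_diff hν hw hwν hsep hδ hbδ hy hball hK
  have hlen : ENNReal.ofReal (2 * δ) ≤ ENNReal.ofReal δ := calc
    ENNReal.ofReal (2 * δ) = μH[1] (Icc (⟪w, y⟫ - δ) (⟪w, y⟫ + δ)) := by
      rw [hausdorffMeasure_real, Real.volume_Icc]; ring_nf
    _ ≤ μH[1] ((fun z => ⟪w, z⟫) '' (E \ K)) := measure_mono hcover
    _ ≤ μH[1] (E \ K) := hausdorffMeasure_image_inner_le hw.le _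
    _ ≤ ENNReal.ofReal δ := hholes
  rw [ENNReal.ofReal_le_ofReal_iff hδ.le] at hlen
  linarith

theorem dist_add_smul_add_smul {w : V} (hw : ‖w‖ = 1) (x : V) (s s' : ℝ) :
    dist (x + s • w) (x + s' • w) = dist s s' := by
  rw [dist_add_left, dist_eq_norm, ← sub_smul, norm_smul, hw, mul_one, Real.dist_eq,
    Real.norm_eq_abs]

theorem infDist_add_smul_le {K : Set V} {x0 w : V} {r0 δ s : ℝ} (hw : ‖w‖ = 1) (hδ : 0 ≤ δ)
    (hx0 : x0 ∈ K)
    (hnear : ∀ s' : ℝ, |s'| + 2 * δ ≤ r0 → infDist (x0 + s' • w) K ≤ 2 * δ) (hs : |s| < r0) :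
    infDist (x0 + s • w) K ≤ 4 * δ := by
  rcases le_or_gt |s| (2 * δ) with hsmall | hlarge
  · calc infDist (x0 + s • w) K ≤ dist (x0 + s • w) (x0 + (0 : ℝ) • w) :=
          infDist_le_dist_of_mem (by simpa using hx0)
      _ = |s| := by rw [dist_add_smul_add_smul hw, Real.dist_eq, sub_zero]
      _ ≤ 4 * δ := by linarith
  obtain ⟨s', hs', hss'⟩ : ∃ s' : ℝ, |s'| + 2 * δ ≤ r0 ∧ dist s s' ≤ 2 * δ := by
    rcases abs_cases s with ⟨habs, -⟩ | ⟨habs, -⟩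
    · exact ⟨s - 2 * δ, by rw [abs_of_nonneg (by linarith)]; linarith,
        by rw [Real.dist_eq, sub_sub_cancel, abs_of_nonneg (by linarith)]⟩
    · exact ⟨s + 2 * δ, by rw [abs_of_nonpos (by linarith)]; linarith,
        by rw [Real.dist_eq, sub_add_cancel_left, abs_neg, abs_of_nonneg (by linarith)]⟩
  calc infDist (x0 + s • w) K ≤ infDist (x0 + s' • w) K + dist (x0 + s • w) (x0 + s' • w) :=
        infDist_le_infDist_add_dist
    _ ≤ 2 * δ + 2 * δ := add_le_add (hnear s' hs') (by rwa [dist_add_smul_add_smul hw])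
    _ = 4 * δ := by ring

end InnerProductSpace

instance : Fact (Module.finrank ℝ E2 = 2) := ⟨finrank_euclideanSpace_fin⟩

theorem infDist_lineThrough_le {x0 y ν w : E2} (hw : ‖w‖ = 1)
    (hpyth : ‖y - x0‖ ^ 2 = ⟪y - x0, ν⟫ ^ 2 + ⟪y - x0, w⟫ ^ 2) :
    infDist y (lineThrough x0 w) ≤ |⟪y - x0, ν⟫| := by
  calc infDist y (lineThrough x0 w) ≤ dist y (x0 + ⟪y - x0, w⟫ • w) :=
        infDist_le_dist_of_mem ⟨_, rfl⟩
    _ = |⟪y - x0, ν⟫| := by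
      rw [dist_eq_norm, ← sub_sub, ← Real.sqrt_sq (norm_nonneg _), ← Real.sqrt_sq_eq_abs,
        norm_sub_sq_real, real_inner_smul_right, norm_smul, hw, hpyth, Real.norm_eq_abs, mul_one,
        sq_abs]
      ring_nf

theorem bilFlatness_le {K : Set E2} {x0 v : E2} {r0 ε : ℝ} (hε : 0 ≤ ε) (hv : v ≠ 0)
    (hK : ∀ y ∈ K ∩ ball x0 r0, infDist y (lineThrough x0 v) ≤ ε * r0)
    (hline : ∀ y ∈ lineThrough x0 v ∩ ball x0 r0, infDist y K ≤ ε * r0) :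
    bilFlatness K x0 r0 ≤ ε :=
  csInf_le ⟨0, fun _ h => h.1⟩ ⟨hε, v, hv, hK, hline⟩

theorem bilFlatness_le_of_separating_extension_general (K E : Set E2) (x0 : E2) (r0 ε : ℝ)
    (hr0 : 0 < r0) (hε : 0 < ε)
    (hx0 : x0 ∈ K) (hKE : K ⊆ E)
    (hsep : Separates E x0 r0)
    (hflat : flatness E x0 r0 ≤ ε)
    (hholes : μH[1] (E \ K) ≤ ENNReal.ofReal (ε * r0)) :
    bilFlatness K x0 r0 ≤ 4 * ε := by
  obtain ⟨-, ν, hν, hνE, hνsep⟩ := hsep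
  have hδ : 0 < ε * r0 := mul_pos hε hr0
  have hbδ : flatness E x0 r0 * r0 ≤ ε * r0 := mul_le_mul_of_nonneg_right hflat hr0.le
  obtain ⟨w, hw, hwν, hpyth⟩ := exists_unit_orthogonal_sq_norm_eq hν
  refine bilFlatness_le (by positivity) (ne_zero_of_norm_ne_zero (hw ▸ one_ne_zero))
    (fun y hy => ?_) ?_
  · calc infDist y (lineThrough x0 w) ≤ |⟪y - x0, ν⟫| := infDist_lineThrough_le hw (hpyth _)
      _ ≤ flatness E x0 r0 * r0 := hνE y ⟨hKE hy.1, hy.2⟩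
      _ ≤ 4 * ε * r0 := by nlinarith
  · rintro _ ⟨⟨s, rfl⟩, hs⟩
    have hnear (s' : ℝ) (hs' : |s'| + 2 * (ε * r0) ≤ r0) :
        infDist (x0 + s' • w) K ≤ 2 * (ε * r0) :=
      infDist_le_of_hausdorffMeasure_diff_le hν hw hwν hνsep hδ hbδ hholes
        (by simp [real_inner_smul_left, hwν])
        (ball_subset_ball' (by simpa [dist_eq_norm, norm_smul, hw, add_comm] using hs'))
    have hs' : |s| < r0 := by simpa [dist_eq_norm, norm_smul, hw] using hs
    linarith [infDist_add_smul_le hw hδ.le hx0 hnear hs']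

/-- If `E` is a separating extension of `K` with flatness at most `ε` and
`H¹(E \ K) ≤ ε r0`, then the bilateral flatness of `K` satisfies `β^bil_K(x0,r0) ≤ 4ε`. -/
theorem bilFlatness_le_of_separating_extension (K E : Set E2) (x0 : E2) (r0 ε : ℝ)
    (hr0 : 0 < r0) (hε : 0 < ε)
    (hK : RelClosedIn K (ball x0 r0)) (hE : RelClosedIn E (ball x0 r0))
    (hx0 : x0 ∈ K) (hKE : K ⊆ E)
    (hsep : Separates E x0 r0)
    (hflat : flatness E x0 r0 ≤ ε)
    (hholes : μH[1] (E \ K) ≤ ENNReal.ofReal (ε * r0)) :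
    bilFlatness K x0 r0 ≤ 4 * ε :=
  bilFlatness_le_of_separating_extension_general K E x0 r0 ε hr0 hε hx0 hKE hsep hflat hholes
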